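/- Let p ≥ 1 be a natural number and let F_p = {y ∈ ℝ | ∃ m e : ℤ, |m| < 2^p ∧ y = m·2^e}. Let m, e be integers with m ≠ 0 and s = m·2^e, and suppose s is not a breakpoint of F_p. Let f ∈ F_p be nearest to s, and let r be a real number with |r| < 2^(e − p − 1). Then f is nearest to s + r, i.e., |s + r − f| ≤ |s + r − g| for all g ∈ F_p. -/

import Mathlib

/-!
Put `G = 2^(e-p)`. Every float of magnitude at least `2^(e-1)` lies on the grid `Gℤ`, and so
does `s`. The float `sign(m)·2^e` lies within `|s| - 2^e` of `s`, so the nearest float `f` has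
`|f| ≥ 2^e` and is on the grid too. Any other float `g` is then either on the grid, where the
absence of a tie forces `|s - g| ≥ |s - f| + G`, or satisfies `|g| < 2^(e-1)`, where
`|s - g| > |s| - 2^(e-1) ≥ |s - f| + 2^(e-1)`. A margin of `G` survives a shift of `s` by less
than `G / 2`.
-/

def IsNearest (F : Set ℝ) (x f : ℝ) : Prop := ∀ u ∈ F, |x - f| ≤ |x - u|

def IsBreakpoint (F : Set ℝ) (x : ℝ) : Prop :=
  ∃ f g : ℝ, f ∈ F ∧ g ∈ F ∧ f ≠ g ∧ IsNearest F x f ∧ IsNearest F x g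

def floatSet (p : ℕ) : Set ℝ :=
  {y : ℝ | ∃ m e : ℤ, |m| < 2 ^ p ∧ y = (m : ℝ) * (2 : ℝ) ^ e}

namespace IsNearest

variable {F : Set ℝ} {x f : ℝ}

lemma abs_sub_lt_of_ne (hfF : f ∈ F) (hf : IsNearest F x f) (hx : ¬ IsBreakpoint F x)
    {g : ℝ} (hg : g ∈ F) (hgf : g ≠ f) : |x - f| < |x - g| :=
  (hf g hg).lt_of_ne fun h => hx ⟨f, g, hfF, hg, hgf.symm, hf, fun u hu => h ▸ hf u hu⟩

lemma add_of_forall_add_le {δ r : ℝ} (h : ∀ g ∈ F, g ≠ f → |x - f| + 2 * δ ≤ |x - g|)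
    (hr : |r| ≤ δ) : IsNearest F (x + r) f := by
  intro g hg
  rcases eq_or_ne g f with rfl | hgf
  · rfl
  have hmargin := h g hg hgf
  have hf_shift : |x + r - f| ≤ |x - f| + |r| := by
    simpa only [sub_add_eq_add_sub] using abs_add_le (x - f) r
  have hg_shift : |x - g| ≤ |x + r - g| + |r| := by
    rw [show x - g = x + r - g - r by ring]
    exact abs_sub _ _
  linarith

end IsNearest

lemma abs_int_mul_add_le_of_lt {δ : ℝ} (hδ : 0 < δ) {A B : ℤ}
    (h : |(A : ℝ) * δ| < |(B : ℝ) * δ|) : |(A : ℝ) * δ| + δ ≤ |(B : ℝ) * δ| := by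
  rw [abs_mul, abs_mul, abs_of_pos hδ] at h ⊢
  have hAB : |A| + 1 ≤ |B| := by
    have : |(A : ℝ)| < |(B : ℝ)| := lt_of_mul_lt_mul_right h hδ.le
    exact_mod_cast this
  have : (|(A : ℝ)| + 1) * δ ≤ |(B : ℝ)| * δ := by
    gcongr
    exact_mod_cast hAB
  linarith

namespace floatSet

variable {p : ℕ}

lemma sign_mul_zpow_mem (hp : 1 ≤ p) {m : ℤ} (hm : m ≠ 0) (e : ℤ) :
    (m.sign : ℝ) * 2 ^ e ∈ floatSet p :=
  ⟨m.sign, e, by rw [Int.abs_sign_of_ne_zero hm]; exact one_lt_pow₀ one_lt_two (by omega),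
    rfl⟩

lemma exists_eq_int_mul_zpow {e : ℤ} {g : ℝ} (hg : g ∈ floatSet p)
    (hge : (2 : ℝ) ^ (e - 1) ≤ |g|) :
    ∃ N : ℤ, g = N * 2 ^ (e - p) := by
  obtain ⟨n, k, hn, rfl⟩ := hg
  have hk : e - p ≤ k := by
    by_contra! hk
    have hn' : |(n : ℝ)| < 2 ^ (p : ℤ) := by rw [zpow_natCast]; exact_mod_cast hn
    have : |(n : ℝ) * 2 ^ k| < 2 ^ (e - 1) :=
      calc |(n : ℝ) * 2 ^ k| = |(n : ℝ)| * 2 ^ k := by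
            rw [abs_mul, abs_of_pos (zpow_pos two_pos k : (0 : ℝ) < 2 ^ k)]
      _ < 2 ^ (p : ℤ) * 2 ^ k := by gcongr
      _ = 2 ^ ((p : ℤ) + k) := (zpow_add₀ two_ne_zero _ _).symm
      _ ≤ 2 ^ (e - 1) := zpow_le_zpow_right₀ one_le_two (by omega)
    linarith
  obtain ⟨j, hj⟩ := Int.eq_ofNat_of_zero_le (sub_nonneg.mpr hk)
  refine ⟨n * 2 ^ j, ?_⟩
  rw [show k = e - p + j by omega, zpow_add₀ two_ne_zero, zpow_natCast]
  push_cast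
  ring

variable {m e : ℤ} {f : ℝ}

lemma abs_sub_le_of_isNearest (hp : 1 ≤ p) (hm : m ≠ 0)
    (hf : IsNearest (floatSet p) (m * 2 ^ e) f) :
    |m * 2 ^ e - f| ≤ |(m : ℝ) * 2 ^ e| - 2 ^ e := by
  refine (hf _ (sign_mul_zpow_mem hp hm e)).trans_eq ?_
  have hsub : m - m.sign = m.sign * (|m| - 1) := by
    nth_rw 1 [← Int.sign_mul_abs m]; ring
  have hdiff : |m - m.sign| = |m| - 1 := by
    rw [hsub, abs_mul, Int.abs_sign_of_ne_zero hm, one_mul,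
      abs_of_nonneg (sub_nonneg.mpr (Int.one_le_abs hm))]
  have hdiff' : |(m : ℝ) - m.sign| = |(m : ℝ)| - 1 := by exact_mod_cast hdiff
  rw [← sub_mul, abs_mul, abs_mul, hdiff', abs_of_pos (zpow_pos two_pos e : (0 : ℝ) < 2 ^ e)]
  ring

lemma add_zpow_le_abs_sub (hp : 1 ≤ p) (hm : m ≠ 0)
    (hs : ¬ IsBreakpoint (floatSet p) (m * 2 ^ e)) (hfF : f ∈ floatSet p)
    (hf : IsNearest (floatSet p) (m * 2 ^ e) f) {g : ℝ} (hg : g ∈ floatSet p) (hgf : g ≠ f) :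
    |m * 2 ^ e - f| + 2 ^ (e - p) ≤ |m * 2 ^ e - g| := by
  set s : ℝ := m * 2 ^ e
  have hsf : |s - f| ≤ |s| - 2 ^ e := abs_sub_le_of_isNearest hp hm hf
  have hhalf : (2 : ℝ) ^ e = 2 * 2 ^ (e - 1) := by
    rw [← zpow_one_add₀ two_ne_zero]; norm_num
  have hG : (2 : ℝ) ^ (e - p) ≤ 2 ^ (e - 1) := zpow_le_zpow_right₀ one_le_two (by omega)
  by_cases hge : (2 : ℝ) ^ (e - 1) ≤ |g|
  · have hfge : (2 : ℝ) ^ (e - 1) ≤ |f| := by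
      have := zpow_pos (two_pos (α := ℝ)) (e - 1)
      linarith [abs_sub_abs_le_abs_sub s f, abs_sub_comm s f]
    obtain ⟨Nf, rfl⟩ := exists_eq_int_mul_zpow hfF hfge
    obtain ⟨Ng, rfl⟩ := exists_eq_int_mul_zpow (e := e) hg hge
    have hsN : s = ((m * 2 ^ p : ℤ) : ℝ) * 2 ^ (e - p) := by
      simp only [s]
      push_cast
      rw [mul_assoc, ← zpow_natCast, ← zpow_add₀ two_ne_zero]
      ring_nf
    have hgrid (N : ℤ) : s - N * 2 ^ (e - p) = ((m * 2 ^ p - N : ℤ) : ℝ) * 2 ^ (e - p) := by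
      rw [hsN]; push_cast; ring
    have hlt := IsNearest.abs_sub_lt_of_ne hfF hf hs hg hgf
    rw [hgrid, hgrid] at hlt ⊢
    exact abs_int_mul_add_le_of_lt (by positivity) hlt
  · linarith [abs_sub_abs_le_abs_sub s g]

end floatSet

/-- If `s = m·2^e` (with `m ≠ 0`) is not a breakpoint of the set `F` of `p`-bit
floating-point values, `f ∈ F` is nearest to `s`, and `|r| < 2^(e - p - 1)`, then `f`
is also nearest to `s + r`. -/
theorem stmt_11 (p : ℕ) (hp : 1 ≤ p)
    (F : Set ℝ) (hF : F = {y : ℝ | ∃ m e : ℤ, |m| < 2 ^ p ∧ y = (m : ℝ) * (2 : ℝ) ^ e})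
    (m e : ℤ) (hm : m ≠ 0) (s : ℝ) (hs : s = (m : ℝ) * (2 : ℝ) ^ e)
    (hnb : ¬ ∃ f g : ℝ, f ∈ F ∧ g ∈ F ∧ f ≠ g ∧
      (∀ u ∈ F, |s - f| ≤ |s - u|) ∧ (∀ u ∈ F, |s - g| ≤ |s - u|))
    (f : ℝ) (hfF : f ∈ F) (hf : ∀ u ∈ F, |s - f| ≤ |s - u|)
    (r : ℝ) (hr : |r| < (2 : ℝ) ^ (e - (p : ℤ) - 1)) :
    ∀ g ∈ F, |s + r - f| ≤ |s + r - g| := by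
  subst hF hs
  have htwice : (2 : ℝ) * 2 ^ (e - p - 1) = 2 ^ (e - p) := by
    rw [← zpow_one_add₀ two_ne_zero]; ring_nf
  refine IsNearest.add_of_forall_add_le (F := floatSet p) (fun g hg hgf => ?_) hr.le
  rw [htwice]
  exact floatSet.add_zpow_le_abs_sub hp hm hnb hfF hf hg hgf
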